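/- Let $b>0$, $c>0$ and $a\in\mathbb{R}$, and define $\psi_B(Q)=a\,\mathrm{tr}\,Q^2-\tfrac{2b}{3}\,\mathrm{tr}\,Q^3+c\,\mathrm{tr}\,Q^4$ on the set of symmetric traceless real $3\times 3$ matrices. If $a\ge \tfrac{b^2}{27c}$ then $\psi_B$ attains its minimum over this set at $Q=0$; if $a\le \tfrac{b^2}{27c}$ then $\psi_B$ attains its minimum over this set at the uniaxial matrices $Q=s_+\big(n\otimes n-\tfrac13\mathbf{1}\big)$ with $n$ a unit vector and $s_+=\tfrac{b+\sqrt{b^2-24ac}}{4c}$. -/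

import Mathlib

/-!
Diagonalize `Q`: its eigenvalues `x, y, z` sum to zero, so `tr Q⁴ = (tr Q²)² / 2` and
`6 (tr Q³)² ≤ (tr Q²)³`. Write `tr Q² = 2s²/3` with `s ≥ 0`, the value of `tr Q²` on the uniaxial
matrix `s (n⊗n - 1/3)`. Then the cubic term of `Q` is at most that of the uniaxial matrix, so
`ψ_B(Q) ≥ E(s) := ψ_B(s (n⊗n - 1/3)) = (2/3) a s² - (4b/27) s³ + (2c/9) s⁴`, and it remains to
minimize the quartic `E` over `s ≥ 0`: it is nonnegative when `27ac ≥ b²`, and otherwise it is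
smallest at its larger critical point `s₊`.
-/

open Matrix

/-- The quartic Landau–de Gennes bulk free-energy density
`ψ_B(Q) = a tr Q² - (2b/3) tr Q³ + c tr Q⁴`. -/
noncomputable def psiB (a b c : ℝ) (Q : Matrix (Fin 3) (Fin 3) ℝ) : ℝ :=
  a * (Q * Q).trace - (2 * b / 3) * (Q * Q * Q).trace + c * (Q * Q * Q * Q).trace

theorem IsIdempotentElem.smul_add_smul_one_sub_pow {R A : Type*} [CommRing R] [Ring A]
    [Algebra R A] {e : A} (he : IsIdempotentElem e) (α β : R) (k : ℕ) :
    (α • e + β • (1 - e)) ^ k = α ^ k • e + β ^ k • (1 - e) := by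
  induction k with
  | zero => simp
  | succ k ih =>
    rw [pow_succ, ih]
    simp only [add_mul, mul_add, smul_mul_smul_comm, he.eq, he.mul_one_sub_self,
      he.one_sub_mul_self, he.one_sub.eq, smul_zero, add_zero, zero_add, pow_succ]

theorem Matrix.IsHermitian.trace_pow {𝕜 n : Type*} [RCLike 𝕜] [Fintype n] [DecidableEq n]
    {A : Matrix n n 𝕜} (hA : A.IsHermitian) (k : ℕ) :
    (A ^ k).trace = ∑ i, (hA.eigenvalues i : 𝕜) ^ k := by
  conv_lhs => rw [hA.spectral_theorem]
  rw [← map_pow, Unitary.conjStarAlgAut_apply, trace_mul_cycle, Unitary.coe_star_mul_self,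
    one_mul, diagonal_pow, trace_diagonal]
  simp

theorem two_mul_sum_pow_four_eq_of_add_eq_zero {R : Type*} [CommRing R] {x y z : R}
    (h : x + y + z = 0) : 2 * (x ^ 4 + y ^ 4 + z ^ 4) = (x ^ 2 + y ^ 2 + z ^ 2) ^ 2 := by
  rw [eq_neg_of_add_eq_zero_right h]; ring

theorem six_mul_sq_sum_pow_three_le_of_add_eq_zero {R : Type*} [CommRing R] [LinearOrder R]
    [IsStrictOrderedRing R] {x y z : R} (h : x + y + z = 0) :
    6 * (x ^ 3 + y ^ 3 + z ^ 3) ^ 2 ≤ (x ^ 2 + y ^ 2 + z ^ 2) ^ 3 := by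
  have hz : z = -(x + y) := eq_neg_of_add_eq_zero_right h
  subst hz
  nlinarith [sq_nonneg ((x - y) * (x + 2 * y) * (2 * x + y))]

lemma psiB_eq_trace_pow (a b c : ℝ) (Q : Matrix (Fin 3) (Fin 3) ℝ) :
    psiB a b c Q = a * (Q ^ 2).trace - 2 * b / 3 * (Q ^ 3).trace + c * (Q ^ 4).trace := by
  simp only [psiB, pow_succ, pow_zero, one_mul]

noncomputable def uniaxialEnergy (a b c s : ℝ) : ℝ :=
  2 / 3 * a * s ^ 2 - 4 * b / 27 * s ^ 3 + 2 * c / 9 * s ^ 4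

lemma psiB_smul_uniaxial (a b c s : ℝ) {n : Fin 3 → ℝ} (hn : n ⬝ᵥ n = 1) :
    psiB a b c (s • (vecMulVec n n - (1 / 3 : ℝ) • 1)) = uniaxialEnergy a b c s := by
  have hP : IsIdempotentElem (vecMulVec n n) := by
    rw [IsIdempotentElem, vecMulVec_mul_vecMulVec, hn, one_smul]
  have hsplit : s • (vecMulVec n n - (1 / 3 : ℝ) • 1)
      = (2 * s / 3) • vecMulVec n n + (-s / 3) • (1 - vecMulVec n n) := by
    module
  rw [psiB_eq_trace_pow, hsplit]
  simp only [hP.smul_add_smul_one_sub_pow, trace_add, trace_smul, trace_sub, trace_vecMulVec, hn,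
    trace_one, Fintype.card_fin, smul_eq_mul, uniaxialEnergy]
  ring

lemma uniaxialEnergy_le_of_add_eq_zero {a b c x y z : ℝ} (hb : 0 ≤ b) (h : x + y + z = 0) :
    uniaxialEnergy a b c √(3 / 2 * (x ^ 2 + y ^ 2 + z ^ 2))
      ≤ a * (x ^ 2 + y ^ 2 + z ^ 2) - 2 * b / 3 * (x ^ 3 + y ^ 3 + z ^ 3)
        + c * (x ^ 4 + y ^ 4 + z ^ 4) := by
  set p := x ^ 2 + y ^ 2 + z ^ 2
  set t := x ^ 3 + y ^ 3 + z ^ 3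
  set s := √(3 / 2 * p)
  have hp : p = 2 * s ^ 2 / 3 := by
    rw [Real.sq_sqrt (by positivity)]; ring
  have hquartic : x ^ 4 + y ^ 4 + z ^ 4 = p ^ 2 / 2 := by
    linarith [two_mul_sum_pow_four_eq_of_add_eq_zero h]
  have ht : t ≤ 2 * s ^ 3 / 9 := by
    have h6 : 6 * t ^ 2 ≤ p ^ 3 := six_mul_sq_sum_pow_three_le_of_add_eq_zero h
    refine abs_le_of_sq_le_sq' ?_ (by positivity) |>.2
    rw [hp] at h6
    linarith
  rw [hquartic, hp, uniaxialEnergy]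
  linarith [mul_le_mul_of_nonneg_left ht hb]

lemma uniaxialEnergy_le_psiB {a b c : ℝ} (hb : 0 ≤ b) {Q : Matrix (Fin 3) (Fin 3) ℝ}
    (hQ : Q.IsSymm) (htr : Q.trace = 0) :
    uniaxialEnergy a b c √(3 / 2 * (Q ^ 2).trace) ≤ psiB a b c Q := by
  have hH : Q.IsHermitian := isHermitian_iff_isSymm.2 hQ
  have htrace_pow (k : ℕ) : (Q ^ k).trace = ∑ i, hH.eigenvalues i ^ k := by
    simpa using hH.trace_pow k
  rw [← pow_one Q, htrace_pow, Fin.sum_univ_three] at htr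
  rw [psiB_eq_trace_pow]
  simp only [htrace_pow, Fin.sum_univ_three]
  exact uniaxialEnergy_le_of_add_eq_zero hb (by simpa using htr)

lemma uniaxialEnergy_nonneg {a b c : ℝ} (hc : 0 < c) (ha : b ^ 2 / (27 * c) ≤ a) (s : ℝ) :
    0 ≤ uniaxialEnergy a b c s := by
  have hac : b ^ 2 ≤ 27 * a * c := by rw [div_le_iff₀ (by positivity)] at ha; linarith
  have hquad : 0 ≤ 3 * a - 2 * b / 3 * s + c * s ^ 2 := by
    refine nonneg_of_mul_nonneg_right ?_ hc
    nlinarith [sq_nonneg (c * s - b / 3)]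
  calc 0 ≤ 2 / 9 * s ^ 2 * (3 * a - 2 * b / 3 * s + c * s ^ 2) := by positivity
    _ = uniaxialEnergy a b c s := by rw [uniaxialEnergy]; ring

lemma uniaxialEnergy_sPlus_le {a b c : ℝ} (hb : 0 ≤ b) (hc : 0 < c) (ha : a ≤ b ^ 2 / (27 * c))
    {s : ℝ} (hs : 0 ≤ s) :
    uniaxialEnergy a b c ((b + √(b ^ 2 - 24 * a * c)) / (4 * c)) ≤ uniaxialEnergy a b c s := by
  have hac : 27 * a * c ≤ b ^ 2 := by rw [le_div_iff₀ (by positivity)] at ha; linarith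
  set r := √(b ^ 2 - 24 * a * c)
  have hr : r ^ 2 = b ^ 2 - 24 * a * c := Real.sq_sqrt (by nlinarith)
  have hrb : 0 ≤ 3 * r - b :=
    sub_nonneg.2 (abs_le_of_sq_le_sq' (by nlinarith) (by positivity)).2
  set sPlus := (b + r) / (4 * c) with hsPlus
  have ha' : a = (b ^ 2 - r ^ 2) / (24 * c) := by
    rw [hr]; field_simp; ring
  -- `sPlus` is a critical point of `uniaxialEnergy`, hence a double root of this difference.
  have hfactor : uniaxialEnergy a b c s - uniaxialEnergy a b c sPlus
      = 2 * c / 9 * (s - sPlus) ^ 2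
        * (s ^ 2 + (3 * r - b) / (6 * c) * s + sPlus * (3 * r - b) / (12 * c)) := by
    rw [uniaxialEnergy, uniaxialEnergy, ha', hsPlus]; field_simp; ring
  have hcofactor : 0 ≤ s ^ 2 + (3 * r - b) / (6 * c) * s + sPlus * (3 * r - b) / (12 * c) := by
    positivity
  linarith [mul_nonneg (by positivity : 0 ≤ 2 * c / 9 * (s - sPlus) ^ 2) hcofactor]

theorem landau_de_gennes_bulk_minimizers (a b c : ℝ) (hb : 0 < b) (hc : 0 < c) :
    (b ^ 2 / (27 * c) ≤ a →
      ∀ Q : Matrix (Fin 3) (Fin 3) ℝ, Q.IsSymm → Q.trace = 0 →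
        psiB a b c 0 ≤ psiB a b c Q) ∧
    (a ≤ b ^ 2 / (27 * c) →
      ∀ n : Fin 3 → ℝ, n ⬝ᵥ n = 1 →
        ((( b + Real.sqrt (b ^ 2 - 24 * a * c)) / (4 * c)) •
            (vecMulVec n n - (1 / 3 : ℝ) • (1 : Matrix (Fin 3) (Fin 3) ℝ))).IsSymm ∧
        ((( b + Real.sqrt (b ^ 2 - 24 * a * c)) / (4 * c)) •
            (vecMulVec n n - (1 / 3 : ℝ) • (1 : Matrix (Fin 3) (Fin 3) ℝ))).trace = 0 ∧
        ∀ Q : Matrix (Fin 3) (Fin 3) ℝ, Q.IsSymm → Q.trace = 0 →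
          psiB a b c
            ((( b + Real.sqrt (b ^ 2 - 24 * a * c)) / (4 * c)) •
              (vecMulVec n n - (1 / 3 : ℝ) • (1 : Matrix (Fin 3) (Fin 3) ℝ)))
            ≤ psiB a b c Q) := by
  refine ⟨fun ha Q hQ htr => ?_, fun ha n hn => ⟨?_, ?_, fun Q hQ htr => ?_⟩⟩
  · calc psiB a b c 0 = 0 := by simp [psiB]
      _ ≤ _ := uniaxialEnergy_nonneg hc ha _
      _ ≤ psiB a b c Q := uniaxialEnergy_le_psiB hb.le hQ htr
  · exact (IsSymm.sub (transpose_vecMulVec n n) (isSymm_one.smul _)).smul _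
  · simp [trace_sub, hn]
  · rw [psiB_smul_uniaxial _ _ _ _ hn]
    exact (uniaxialEnergy_sPlus_le hb.le hc ha (by positivity)).trans
      (uniaxialEnergy_le_psiB hb.le hQ htr)
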